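/- (Bounded known-labeled open space for OVA SSVM.) Let n ≥ 1 and for each class k = 1, …, n let f_k(x) = Σᵢ₌₁^{m_k} y_{k,i} α_{k,i} exp(−γ_k ‖x_{k,i} − x‖²) + b_k be an RBF SVM decision function with support vectors x_{k,i} ∈ ℝ^d, labels y_{k,i} ∈ {−1, 1}, multipliers α_{k,i} ≥ 0, kernel parameter γ_k > 0, and bias term b_k. If b_k < 0 for every k, then the set of points classified as known, {x ∈ ℝ^d : ∃ k, f_k(x) > 0}, is a bounded subset of ℝ^d. -/

import Mathlib

/-!
Each Gaussian kernel `exp (-γ ‖c - x‖²)` with `γ > 0` vanishes as `x` leaves every bounded set,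
so each decision function tends to its bias `b_k < 0` there; hence `f_k > 0` only on a bounded
set, and the known-labeled region is a finite union of such sets.
-/

open Filter Topology Bornology Real

lemma Bornology.isBounded_setOf_lt_of_tendsto_cobounded {α : Type*} [Bornology α] {f : α → ℝ}
    {a c : ℝ} (hf : Tendsto f (cobounded α) (𝓝 a)) (hac : a < c) :
    IsBounded {x | c < f x} := by
  rw [isBounded_def]
  filter_upwards [hf.eventually (gt_mem_nhds hac)] with x hx
  exact not_lt.2 hx.le

lemma tendsto_exp_neg_mul_dist_sq_cobounded {α : Type*} [PseudoMetricSpace α] (c : α) {γ : ℝ}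
    (hγ : 0 < γ) : Tendsto (fun x => exp (-γ * dist c x ^ 2)) (cobounded α) (𝓝 0) := by
  have hsq : Tendsto (fun x => dist c x ^ 2) (cobounded α) atTop :=
    (tendsto_pow_atTop two_ne_zero).comp (Metric.tendsto_dist_left_cobounded_atTop c)
  exact tendsto_exp_atBot.comp (hsq.const_mul_atTop_of_neg (neg_lt_zero.2 hγ))

lemma tendsto_rbf_decision_cobounded {E ι : Type*} [SeminormedAddCommGroup E] [Fintype ι]
    (xs : ι → E) (w : ι → ℝ) {γ : ℝ} (hγ : 0 < γ) (b : ℝ) :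
    Tendsto (fun x => (∑ i, w i * exp (-γ * ‖xs i - x‖ ^ 2)) + b) (cobounded E) (𝓝 b) := by
  have hterm : ∀ i, Tendsto (fun x => w i * exp (-γ * ‖xs i - x‖ ^ 2)) (cobounded E) (𝓝 0) :=
    fun i => by
      simpa only [dist_eq_norm, mul_zero] using
        (tendsto_exp_neg_mul_dist_sq_cobounded (xs i) hγ).const_mul (w i)
  simpa only [Finset.sum_const_zero, zero_add] using
    (tendsto_finsetSum Finset.univ fun i _ => hterm i).add_const b

theorem ova_ssvm_bounded_klos_general (d n : ℕ) (m : Fin n → ℕ)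
    (xs : (k : Fin n) → Fin (m k) → EuclideanSpace ℝ (Fin d))
    (y α : (k : Fin n) → Fin (m k) → ℝ)
    (γ : Fin n → ℝ) (hγ : ∀ k, 0 < γ k)
    (b : Fin n → ℝ) (hb : ∀ k, b k < 0) :
    Bornology.IsBounded {x : EuclideanSpace ℝ (Fin d) |
      ∃ k, 0 < (∑ i, y k i * α k i * Real.exp (-(γ k) * ‖xs k i - x‖ ^ 2)) + b k} := by
  rw [Set.ofPred_exists]
  exact isBounded_iUnion.2 fun k => isBounded_setOf_lt_of_tendsto_cobounded
    (tendsto_rbf_decision_cobounded (xs k) (fun i => y k i * α k i) (hγ k) (b k)) (hb k)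

/-- Bounded known-labeled open space for OVA SSVM: If every binary RBF
SVM decision function f_k(x) = Σᵢ y_{k,i} α_{k,i} exp(−γ_k ‖x_{k,i} − x‖²) + b_k has a
negative bias term b_k, then the set of points classified as known,
{x : ∃ k, f_k(x) > 0}, is bounded. -/
theorem ova_ssvm_bounded_klos (d n : ℕ) (hn : 1 ≤ n) (m : Fin n → ℕ)
    (xs : (k : Fin n) → Fin (m k) → EuclideanSpace ℝ (Fin d))
    (y α : (k : Fin n) → Fin (m k) → ℝ)
    (hy : ∀ k i, y k i = -1 ∨ y k i = 1) (hα : ∀ k i, 0 ≤ α k i)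
    (γ : Fin n → ℝ) (hγ : ∀ k, 0 < γ k)
    (b : Fin n → ℝ) (hb : ∀ k, b k < 0) :
    Bornology.IsBounded {x : EuclideanSpace ℝ (Fin d) |
      ∃ k, 0 < (∑ i, y k i * α k i * Real.exp (-(γ k) * ‖xs k i - x‖ ^ 2)) + b k} :=
  ova_ssvm_bounded_klos_general d n m xs y α γ hγ b hb
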